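/- Let G be a chordal graph (a graph with no induced cycle of length at least 4) and let A, B ⊆ V(G). Then the CC-Piran graph Π^cc(A, B) is even-hole-free, i.e., it contains no induced cycle of even length at least 4. -/

import Mathlib

open scoped Classical

noncomputable section

/-- `U` induces a connected subgraph of `G`. -/
def IsConnSub {V : Type*} (G : SimpleGraph V) (U : Finset V) : Prop :=
  (G.induce (U : Set V)).Connected

/-- The set of connected components of a vertex subset `U`:
maximal subsets of `U` inducing connected subgraphs. -/
def comps {V : Type*} [Fintype V] [DecidableEq V] (G : SimpleGraph V) (U : Finset V) :
    Finset (Finset V) :=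
  Finset.univ.filter (fun C => C ⊆ U ∧ IsConnSub G C ∧
    ∀ D : Finset V, C ⊆ D → D ⊆ U → IsConnSub G D → D = C)

/-- The CC-multiset of `U`: the multiset of sizes of connected components of `U`. -/
def ccMultiset {V : Type*} [Fintype V] [DecidableEq V] (G : SimpleGraph V) (U : Finset V) :
    Multiset ℕ :=
  (comps G U).val.map Finset.card

/-- Adjacency under component jumping (CJ). -/
def adjCJ {V : Type*} [Fintype V] [DecidableEq V] (G : SimpleGraph V) (U U' : Finset V) : Prop :=
  ccMultiset G U = ccMultiset G U' ∧
  (comps G U \ comps G U').card = 1 ∧ (comps G U' \ comps G U).card = 1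

/-- Adjacency under component sliding (CS). -/
def adjCS {V : Type*} [Fintype V] [DecidableEq V] (G : SimpleGraph V) (U U' : Finset V) : Prop :=
  adjCJ G U U' ∧
  ∀ C ∈ comps G U \ comps G U', ∀ C' ∈ comps G U' \ comps G U, IsConnSub G (C ∪ C')

/-- Adjacency under CS1 (component sliding by one vertex). -/
def adjCS1 {V : Type*} [Fintype V] [DecidableEq V] (G : SimpleGraph V) (U U' : Finset V) : Prop :=
  adjCS G U U' ∧
  ∀ C ∈ comps G U \ comps G U', ∀ C' ∈ comps G U' \ comps G U,
    (C \ C').card = 1 ∧ (C' \ C).card = 1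

/-- Adjacency under token jumping (TJ). -/
def adjTJ {V : Type*} [DecidableEq V] (G : SimpleGraph V) (U U' : Finset V) : Prop :=
  (U \ U').card = 1 ∧ (U' \ U).card = 1

/-- `A` and `B` are reconfigurable under rule `R` keeping the CC-multiset equal to `M`. -/
def Reconf {V : Type*} [Fintype V] [DecidableEq V] (G : SimpleGraph V) (M : Multiset ℕ)
    (R : Finset V → Finset V → Prop) (A B : Finset V) : Prop :=
  ∃ (ℓ : ℕ) (W : ℕ → Finset V), W 0 = A ∧ W ℓ = B ∧
    (∀ i ≤ ℓ, ccMultiset G (W i) = M) ∧ ∀ i < ℓ, R (W i) (W (i + 1))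

end

/-- The vertex set of the CC-Piran graph: connected components of `A` that are not
components of `B`, together with components of `B` that are not components of `A`. -/
noncomputable def ccPiranVerts {V : Type*} [Fintype V] [DecidableEq V] (G : SimpleGraph V)
    (A B : Finset V) : Finset (Finset V) :=
  (comps G A \ comps G B) ∪ (comps G B \ comps G A)

/-- The CC-Piran graph `Π^cc(A, B)`: vertices are the components in the symmetric
difference of `C(A)` and `C(B)`; a component of `C(A) \ C(B)` is joined to a component
of `C(B) \ C(A)` whenever the two touch. -/
noncomputable def ccPiran {V : Type*} [Fintype V] [DecidableEq V] (G : SimpleGraph V) (A B : Finset V) :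
    SimpleGraph {C : Finset V // C ∈ ccPiranVerts G A B} where
  Adj C D :=
    ((C.1 ∈ comps G A \ comps G B ∧ D.1 ∈ comps G B \ comps G A) ∨
     (D.1 ∈ comps G A \ comps G B ∧ C.1 ∈ comps G B \ comps G A)) ∧
    IsConnSub G (C.1 ∪ D.1)
  symm := by
    constructor
    rintro C D ⟨h1, h2⟩
    exact ⟨h1.symm, by rwa [Finset.union_comm]⟩
  loopless := by
    constructor
    rintro C ⟨h1 | h1, _⟩ <;>
      exact (Finset.mem_sdiff.mp h1.1).2 (Finset.mem_sdiff.mp h1.2).1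

/-!
An induced cycle `C₀, …, C_{ℓ-1}` (`ℓ ≥ 4`) of `Π^cc(A, B)` is a cyclic sequence of connected
vertex sets of `G` in which exactly the consecutive sets touch: two distinct components of the
same set never touch, and a component of `A` touches a component of `B` exactly when they are
adjacent in `Π^cc(A, B)`. Such a cycle of sets always produces an induced cycle of length at
least four in `G`, by descent on `∑ |Cᵢ| - ℓ`. If some `Cᵢ` has two vertices, remove a vertex `u`
that leaves `Cᵢ` connected. Either `{u}` or `Cᵢ \ {u}` still touches both neighbours of `Cᵢ` and
replaces it, or `Cᵢ` splits into `{u}` and `Cᵢ \ {u}`, each touching one neighbour, and the cycle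
gets longer. Once all sets are singletons they are the vertices of an induced cycle.
-/

open SimpleGraph Finset

section Touches

variable {V : Type*} {G : SimpleGraph V} {X X' Y Y' : Finset V}

def Touches (G : SimpleGraph V) (X Y : Finset V) : Prop :=
  ∃ x ∈ X, ∃ y ∈ Y, x = y ∨ G.Adj x y

theorem Touches.symm (h : Touches G X Y) : Touches G Y X := by
  obtain ⟨x, hx, y, hy, hxy⟩ := h
  exact ⟨y, hy, x, hx, hxy.imp Eq.symm Adj.symm⟩

theorem touches_comm : Touches G X Y ↔ Touches G Y X :=
  ⟨Touches.symm, Touches.symm⟩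

theorem Touches.mono (h : Touches G X Y) (hX : X ⊆ X') (hY : Y ⊆ Y') : Touches G X' Y' := by
  obtain ⟨x, hx, y, hy, hxy⟩ := h
  exact ⟨x, hX hx, y, hY hy, hxy⟩

theorem touches_union_left [DecidableEq V] :
    Touches G (X ∪ X') Y ↔ Touches G X Y ∨ Touches G X' Y := by
  simp only [Touches, mem_union, or_and_right, exists_or]

theorem touches_singleton_singleton {a b : V} : Touches G {a} {b} ↔ a = b ∨ G.Adj a b := by
  simp [Touches]

theorem IsConnSub.nonempty (h : IsConnSub G X) : X.Nonempty := by
  obtain ⟨⟨v, hv⟩⟩ := Connected.nonempty h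
  exact ⟨v, hv⟩

theorem isConnSub_singleton (v : V) : IsConnSub G {v} := by
  rw [IsConnSub, coe_singleton, induce_singleton_eq_top]
  exact connected_top

variable [DecidableEq V]

theorem IsConnSub.union (hX : IsConnSub G X) (hY : IsConnSub G Y) (h : Touches G X Y) :
    IsConnSub G (X ∪ Y) := by
  obtain ⟨x, hx, y, hy, rfl | hxy⟩ := h
  · rw [IsConnSub, coe_union]
    exact induce_union_connected hX.preconnected hY.preconnected ⟨x, hx, hy⟩
  · rw [IsConnSub, coe_union]
    exact connected_induce_union hX.preconnected hY.preconnected hx hy hxy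

/-- A walk in `X ∪ Y` from `X` into `Y \ X` has to step from `X` to `Y` somewhere. -/
theorem IsConnSub.touches (hX : X.Nonempty) (hY : Y.Nonempty) (h : IsConnSub G (X ∪ Y)) :
    Touches G X Y := by
  obtain ⟨x, hx⟩ := hX
  obtain ⟨y, hy⟩ := hY
  by_cases hyX : y ∈ X
  · exact ⟨y, hyX, y, hy, Or.inl rfl⟩
  obtain ⟨p⟩ := h.preconnected ⟨x, by simp [hx]⟩ ⟨y, by simp [hy]⟩
  obtain ⟨d, -, hd₁, hd₂⟩ := p.exists_boundary_dart {z | z.1 ∈ X} hx hyX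
  have hd₂' : d.snd.1 ∈ Y := by
    have := d.snd.2
    simp only [coe_union, Set.mem_union, mem_coe] at this
    exact this.resolve_left hd₂
  exact ⟨_, hd₁, _, hd₂', Or.inr d.adj⟩

theorem IsConnSub.exists_isConnSub_erase {M : Finset V} (h : IsConnSub G M) (hM : 2 ≤ #M) :
    ∃ u ∈ M, IsConnSub G (M.erase u) := by
  obtain ⟨a, ha, b, hb, hab⟩ := one_lt_card.mp hM
  have : Nontrivial (M : Set V) := ⟨⟨a, ha⟩, ⟨b, hb⟩, fun h => hab (congrArg Subtype.val h)⟩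
  obtain ⟨u, hu⟩ := h.exists_connected_induce_compl_singleton_of_finite_nontrivial
  let f : (G.induce (M : Set V)).induce {u}ᶜ →g G.induce (M.erase u : Set V) :=
    { toFun := fun w => ⟨w.1.1, mem_erase.mpr
        ⟨fun h => w.2 (Subtype.ext h), w.1.2⟩⟩
      map_rel' := fun h => h }
  refine ⟨u.1, u.2, hu.map f ?_⟩
  rintro ⟨w, hw⟩
  obtain ⟨hwu, hwM⟩ := mem_erase.mp hw
  exact ⟨⟨⟨w, hwM⟩, fun h => hwu (congrArg Subtype.val h)⟩, rfl⟩

end Touches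

section BlobModel

variable {V ι ι' : Type*} {G : SimpleGraph V} {H : SimpleGraph ι} {S : ι → Finset V}

/-- An induced-minor model of `H` in `G`, except that the branch sets of adjacent vertices may
overlap. -/
structure IsBlobModel (G : SimpleGraph V) (H : SimpleGraph ι) (S : ι → Finset V) : Prop where
  isConnSub : ∀ i, IsConnSub G (S i)
  touches_iff : ∀ {i j}, i ≠ j → (Touches G (S i) (S j) ↔ H.Adj i j)

theorem IsBlobModel.comp (hS : IsBlobModel G H S) {H' : SimpleGraph ι'} (f : H' ↪g H) :
    IsBlobModel G H' (S ∘ f) where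
  isConnSub i := hS.isConnSub (f i)
  touches_iff hij := (hS.touches_iff (f.injective.ne hij)).trans f.map_adj_iff

theorem IsBlobModel.not_touches_of_subset (hS : IsBlobModel G H S) {i j : ι} (hij : i ≠ j)
    (hadj : ¬H.Adj i j) {X : Finset V} (hX : X ⊆ S i) : ¬Touches G X (S j) :=
  fun h => hadj ((hS.touches_iff hij).mp (h.mono hX subset_rfl))

theorem IsBlobModel.update [DecidableEq ι] (hS : IsBlobModel G H S) {i : ι} {M : Finset V}
    (hM : IsConnSub G M) (hMS : M ⊆ S i) (hN : ∀ j, H.Adj i j → Touches G M (S j)) :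
    IsBlobModel G H (Function.update S i M) where
  isConnSub j := by
    rcases eq_or_ne j i with rfl | hji
    · simpa using hM
    · simpa [hji] using hS.isConnSub j
  touches_iff {j l} hjl := by
    have key : ∀ l, i ≠ l → (Touches G M (S l) ↔ H.Adj i l) := fun l hil =>
      ⟨fun h => by_contra fun hadj => hS.not_touches_of_subset hil hadj hMS h, hN l⟩
    rcases eq_or_ne j i with rfl | hji
    · simpa [hjl.symm] using key l hjl
    rcases eq_or_ne l i with rfl | hli
    · simpa [hji, touches_comm, H.adj_comm] using key j hji.symm
    · simpa [hji, hli] using hS.touches_iff hjl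

/-- If `S i = S j` for `i ≠ j`, then `i` and `j` are adjacent twins in `H`. -/
theorem IsBlobModel.injective (hS : IsBlobModel G H S)
    (hH : ∀ i j, H.Adj i j → ∃ m ≠ j, H.Adj i m ∧ ¬H.Adj j m) : Function.Injective S := by
  intro i j hSij
  by_contra hij
  obtain ⟨x, hx⟩ := (hS.isConnSub i).nonempty
  have hadj : H.Adj i j := (hS.touches_iff hij).mp ⟨x, hx, x, hSij ▸ hx, Or.inl rfl⟩
  obtain ⟨m, hmj, him, hjm⟩ := hH i j hadj
  refine hjm ((hS.touches_iff hmj.symm).mp ?_)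
  rw [← hSij]
  exact (hS.touches_iff him.ne).mpr him

theorem IsBlobModel.nonempty_embedding (hS : IsBlobModel G H S) (hinj : Function.Injective S)
    (hone : ∀ i, #(S i) = 1) : Nonempty (H ↪g G) := by
  choose w hw using fun i => card_eq_one.mp (hone i)
  have hwinj : Function.Injective w := fun i j h => hinj (by rw [hw, hw, h])
  refine ⟨⟨⟨w, hwinj⟩, fun {i j} => ?_⟩⟩
  rcases eq_or_ne i j with rfl | hij
  · simp
  · have := hS.touches_iff hij
    rw [hw, hw, touches_singleton_singleton, or_iff_right (hwinj.ne hij)] at this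
    exact this

end BlobModel

section CycleGraph

theorem cycleGraph_adj_iff_val {n : ℕ} (hn : 2 ≤ n) {u v : Fin n} :
    (cycleGraph n).Adj u v ↔ u.val + 1 = v.val ∨ v.val + 1 = u.val ∨
      (u.val = 0 ∧ v.val + 1 = n) ∨ (v.val = 0 ∧ u.val + 1 = n) := by
  have e₁ : v ≤ u → ((u - v : Fin n) : ℕ) = u - v := Fin.coe_sub_iff_le.mpr
  have e₂ : u < v → ((u - v : Fin n) : ℕ) = n + u - v := Fin.coe_sub_iff_lt.mpr
  have e₃ : u ≤ v → ((v - u : Fin n) : ℕ) = v - u := Fin.coe_sub_iff_le.mpr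
  have e₄ : v < u → ((v - u : Fin n) : ℕ) = n + v - u := Fin.coe_sub_iff_lt.mpr
  simp only [Fin.le_iff_val_le_val, Fin.lt_def] at e₁ e₂ e₃ e₄
  rw [cycleGraph_adj']
  omega

def cycleGraph.addRight {n : ℕ} [NeZero n] (c : Fin n) : cycleGraph n ≃g cycleGraph n where
  toEquiv := Equiv.addRight c
  map_rel_iff' := by simp [cycleGraph_adj', add_sub_add_right_eq_sub]

theorem cycleGraph_exists_adj_not_adj {n : ℕ} (hn : 4 ≤ n) (i j : Fin n)
    (hij : (cycleGraph n).Adj i j) : ∃ m ≠ j, (cycleGraph n).Adj i m ∧ ¬(cycleGraph n).Adj j m := by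
  obtain ⟨n, rfl⟩ : ∃ n', n = n' + 1 := ⟨n - 1, by omega⟩
  have hsucc := Fin.val_add_one i
  have hpred := Fin.coe_sub_one i
  have hi := i.isLt
  have hj := j.isLt
  simp only [Fin.ext_iff, Fin.val_last, Fin.val_zero] at hsucc hpred
  simp only [cycleGraph_adj_iff_val (by omega : 2 ≤ n + 1), ne_eq, Fin.ext_iff] at hij ⊢
  -- `m` is the neighbour of `i` other than `j`.
  by_cases hj' : j = i + 1
  · refine ⟨i - 1, ?_⟩
    rw [Fin.ext_iff] at hj'
    split_ifs at hsucc hpred <;> omega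
  · refine ⟨i + 1, ?_⟩
    rw [Fin.ext_iff] at hj'
    split_ifs at hsucc hpred <;> omega

end CycleGraph

section CycleModel

variable {V : Type*} {G : SimpleGraph V} {n : ℕ}

theorem cycleGraph_adj_zero (hn : 2 ≤ n) {j : Fin (n + 1)} :
    (cycleGraph (n + 1)).Adj 0 j ↔ j = 1 ∨ j = Fin.last n := by
  simp only [cycleGraph_adj_iff_val (by omega : 2 ≤ n + 1), Fin.ext_iff, Fin.val_one',
    Fin.val_last, Nat.mod_eq_of_lt (by omega : 1 < n + 1), Fin.val_zero, true_and]
  omega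

theorem cycleGraph_adj_succ_succ (hn : 2 ≤ n) {i j : Fin (n + 1)} :
    (cycleGraph (n + 2)).Adj i.succ j.succ ↔ (cycleGraph (n + 1)).Adj i j ∧
      ¬(i = 0 ∧ j = Fin.last n) ∧ ¬(j = 0 ∧ i = Fin.last n) := by
  simp only [cycleGraph_adj_iff_val (by omega : 2 ≤ n + 1), cycleGraph_adj_iff_val
    (by omega : 2 ≤ n + 2), Fin.ext_iff, Fin.val_succ, Fin.val_zero, Fin.val_last]
  omega

theorem cycleGraph_adj_zero_succ (hn : 2 ≤ n) {j : Fin (n + 1)} :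
    (cycleGraph (n + 2)).Adj 0 j.succ ↔ j = 0 ∨ j = Fin.last n := by
  simp only [cycleGraph_adj_iff_val (by omega : 2 ≤ n + 2), Fin.ext_iff, Fin.val_succ,
    Fin.val_zero, Fin.val_last, true_and]
  omega

theorem IsBlobModel.update_zero (hn : 2 ≤ n) {S : Fin (n + 1) → Finset V}
    (hS : IsBlobModel G (cycleGraph (n + 1)) S) {M : Finset V} (hM : IsConnSub G M)
    (hMS : M ⊆ S 0) (h_one : Touches G M (S 1)) (h_last : Touches G M (S (Fin.last n))) :
    IsBlobModel G (cycleGraph (n + 1)) (Function.update S 0 M) :=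
  hS.update hM hMS fun j hj => by
    rcases (cycleGraph_adj_zero hn).mp hj with rfl | rfl <;> assumption

theorem IsBlobModel.touches_iff_of_subset_zero (hn : 2 ≤ n) {S : Fin (n + 1) → Finset V}
    (hS : IsBlobModel G (cycleGraph (n + 1)) S) {X : Finset V} (hX : X ⊆ S 0) {j : Fin (n + 1)}
    (hj0 : j ≠ 0) : Touches G X (S j) ↔
      (j = 1 ∧ Touches G X (S 1)) ∨ (j = Fin.last n ∧ Touches G X (S (Fin.last n))) := by
  refine ⟨fun h => ?_, by rintro (⟨rfl, h⟩ | ⟨rfl, h⟩) <;> exact h⟩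
  have hadj := by_contra (hS.not_touches_of_subset hj0.symm · hX h)
  rcases (cycleGraph_adj_zero hn).mp hadj with rfl | rfl
  exacts [Or.inl ⟨rfl, h⟩, Or.inr ⟨rfl, h⟩]

/-- In the longer cycle `P` sits between `S (Fin.last n)` and `Q`, which takes the place of
`S 0`. -/
theorem IsBlobModel.cons_update_zero (hn : 2 ≤ n) {S : Fin (n + 1) → Finset V}
    (hS : IsBlobModel G (cycleGraph (n + 1)) S) {P Q : Finset V} (hP : IsConnSub G P)
    (hQ : IsConnSub G Q) (hPS : P ⊆ S 0) (hQS : Q ⊆ S 0) (hPQ : Touches G P Q)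
    (hP_last : Touches G P (S (Fin.last n))) (hP_one : ¬Touches G P (S 1))
    (hQ_one : Touches G Q (S 1)) (hQ_last : ¬Touches G Q (S (Fin.last n))) :
    IsBlobModel G (cycleGraph (n + 2)) (Fin.cons P (Function.update S 0 Q)) := by
  have h1last : (1 : Fin (n + 1)) ≠ Fin.last n := by
    simp only [Ne, Fin.ext_iff, Fin.val_one', Fin.val_last, Nat.mod_eq_of_lt (by omega : 1 < n + 1)]
    omega
  have hP_iff (j : Fin (n + 1)) :
      Touches G P (Function.update S 0 Q j) ↔ (cycleGraph (n + 2)).Adj 0 j.succ := by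
    rw [cycleGraph_adj_zero_succ hn]
    rcases eq_or_ne j 0 with rfl | hj0
    · simpa using hPQ
    rw [Function.update_of_ne hj0, hS.touches_iff_of_subset_zero hn hPS hj0]
    simp [hj0, hP_one, hP_last]
  have hQ_iff {j : Fin (n + 1)} (hj0 : j ≠ 0) :
      Touches G Q (S j) ↔ (cycleGraph (n + 2)).Adj (0 : Fin (n + 1)).succ j.succ := by
    rw [hS.touches_iff_of_subset_zero hn hQS hj0, cycleGraph_adj_succ_succ hn,
      cycleGraph_adj_zero hn]
    simp only [hQ_one, hQ_last, and_true, and_false, or_false, true_and, hj0, false_and,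
      not_false_eq_true]
    exact ⟨fun h => ⟨Or.inl h, h ▸ h1last⟩, fun h => h.1.resolve_right h.2⟩
  have hR_iff {i j : Fin (n + 1)} (hij : i ≠ j) : Touches G (Function.update S 0 Q i)
      (Function.update S 0 Q j) ↔ (cycleGraph (n + 2)).Adj i.succ j.succ := by
    rcases eq_or_ne i 0 with rfl | hi0
    · simpa [hij.symm] using hQ_iff hij.symm
    rcases eq_or_ne j 0 with rfl | hj0
    · simpa [hi0, touches_comm, adj_comm] using hQ_iff hi0
    · rw [Function.update_of_ne hi0, Function.update_of_ne hj0, hS.touches_iff hij,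
        cycleGraph_adj_succ_succ hn]
      tauto
  constructor
  · intro a
    refine Fin.cases hP (fun j => ?_) a
    rcases eq_or_ne j 0 with rfl | hj0
    · simpa using hQ
    · simpa [hj0] using hS.isConnSub j
  · intro a b hab
    induction a using Fin.cases <;> induction b using Fin.cases
    · exact absurd rfl hab
    · simpa using hP_iff _
    · simpa [touches_comm, adj_comm] using hP_iff _
    · simpa using hR_iff fun h => hab (congrArg Fin.succ h)

end CycleModel

section Hole

variable {V : Type*} {G : SimpleGraph V}

theorem sum_card_update {ι : Type*} [Fintype ι] [DecidableEq ι] (S : ι → Finset V) (i : ι)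
    (M : Finset V) : ∑ j, #(Function.update S i M j) + #(S i) = ∑ j, #(S j) + #M := by
  simp_rw [Function.apply_update (fun _ => Finset.card)]
  rw [sum_update_of_mem (mem_univ i), sum_eq_add_sum_sdiff_singleton_of_mem (mem_univ i)]
  omega

variable [DecidableEq V]

theorem IsBlobModel.exists_smaller {n : ℕ} (hn : 3 ≤ n) {S : Fin (n + 1) → Finset V}
    (hS : IsBlobModel G (cycleGraph (n + 1)) S) (h2 : 2 ≤ #(S 0)) :
    ∃ m, ∃ T : Fin m → Finset V, 4 ≤ m ∧ IsBlobModel G (cycleGraph m) T ∧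
      ∑ i, #(T i) + (n + 1) < ∑ i, #(S i) + m := by
  obtain ⟨u, hu, hM⟩ := (hS.isConnSub 0).exists_isConnSub_erase h2
  set M := (S 0).erase u
  set L := S (Fin.last n)
  have hMS : M ⊆ S 0 := erase_subset u (S 0)
  have huS : {u} ⊆ S 0 := singleton_subset_iff.mpr hu
  have hcard : #M + 1 = #(S 0) := card_erase_add_one hu
  have hsplit : S 0 = {u} ∪ M := by rw [← insert_eq, insert_erase hu]
  have huM : Touches G {u} M :=
    (hsplit ▸ hS.isConnSub 0).touches (singleton_nonempty u) hM.nonempty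
  have h_one : Touches G {u} (S 1) ∨ Touches G M (S 1) := by
    have hadj := (cycleGraph_adj_zero (n := n) (by omega)).mpr (Or.inl rfl)
    rw [← touches_union_left, ← hsplit]
    exact (hS.touches_iff hadj.ne).mpr hadj
  have h_last : Touches G {u} L ∨ Touches G M L := by
    have hadj := (cycleGraph_adj_zero (n := n) (by omega)).mpr (Or.inr rfl)
    rw [← touches_union_left, ← hsplit]
    exact (hS.touches_iff hadj.ne).mpr hadj
  by_cases hu_both : Touches G {u} (S 1) ∧ Touches G {u} L
  · refine ⟨n + 1, _, by omega,
      hS.update_zero (by omega) (isConnSub_singleton u) huS hu_both.1 hu_both.2, ?_⟩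
    have := sum_card_update S 0 {u}
    rw [card_singleton] at this
    omega
  by_cases hM_both : Touches G M (S 1) ∧ Touches G M L
  · refine ⟨n + 1, _, by omega, hS.update_zero (by omega) hM hMS hM_both.1 hM_both.2, ?_⟩
    have := sum_card_update S 0 M
    omega
  have hsum_u := sum_card_update S 0 {u}
  have hsum_M := sum_card_update S 0 M
  rw [card_singleton] at hsum_u
  rcases h_one with hu_one | hM_one
  · refine ⟨n + 2, Fin.cons M (Function.update S 0 {u}), by omega,
      hS.cons_update_zero (by omega) hM (isConnSub_singleton u) hMS huS huM.symm (by tauto)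
        (by tauto) hu_one (by tauto), ?_⟩
    rw [Fin.sum_univ_succ]
    simp only [Fin.cons_zero, Fin.cons_succ]
    omega
  · refine ⟨n + 2, Fin.cons {u} (Function.update S 0 M), by omega,
      hS.cons_update_zero (by omega) (isConnSub_singleton u) hM huS hMS huM (by tauto)
        (by tauto) hM_one (by tauto), ?_⟩
    rw [Fin.sum_univ_succ]
    simp only [Fin.cons_zero, Fin.cons_succ, card_singleton]
    omega

theorem IsBlobModel.exists_hole {k : ℕ} (hk : 4 ≤ k) {S : Fin k → Finset V}
    (hS : IsBlobModel G (cycleGraph k) S) : ∃ m, 4 ≤ m ∧ Nonempty (cycleGraph m ↪g G) := by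
  induction hN : ∑ i, #(S i) - k using Nat.strong_induction_on generalizing k S with
  | _ N ih =>
  obtain ⟨n, rfl⟩ : ∃ n, k = n + 1 := ⟨k - 1, by omega⟩
  by_cases hone : ∀ i, #(S i) = 1
  · exact ⟨n + 1, hk, hS.nonempty_embedding (hS.injective (cycleGraph_exists_adj_not_adj hk))
      hone⟩
  obtain ⟨c, hc⟩ := not_forall.mp hone
  have hc2 : 2 ≤ #(S c) := by
    have := (hS.isConnSub c).nonempty.card_pos
    omega
  have hsum : n + 1 < ∑ i, #(S i) := by
    calc n + 1 = ∑ _i : Fin (n + 1), 1 := by simp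
      _ < ∑ i, #(S i) := sum_lt_sum (fun i _ => (hS.isConnSub i).nonempty.card_pos)
          ⟨c, mem_univ c, by omega⟩
  let e := cycleGraph.addRight c
  have hsum_e : ∑ i, #((S ∘ e.toEmbedding) i) = ∑ i, #(S i) :=
    e.toEquiv.sum_comp (fun i => #(S i))
  obtain ⟨m, T, hm, hT, hlt⟩ :=
    (hS.comp e.toEmbedding).exists_smaller (by omega) (by simpa [e, cycleGraph.addRight] using hc2)
  exact ih _ (by omega) hm hT rfl

end Hole

section Piran

variable {V : Type*} [Fintype V] [DecidableEq V] {G : SimpleGraph V}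

theorem mem_comps {U C : Finset V} : C ∈ comps G U ↔
    C ⊆ U ∧ IsConnSub G C ∧ ∀ D : Finset V, C ⊆ D → D ⊆ U → IsConnSub G D → D = C := by
  simp [comps]

theorem not_touches_of_mem_comps {U C D : Finset V} (hC : C ∈ comps G U) (hD : D ∈ comps G U)
    (hCD : C ≠ D) : ¬Touches G C D := fun h => by
  rw [mem_comps] at hC hD
  have hCD' := hC.2.1.union hD.2.1 h
  have hC' := hC.2.2 _ subset_union_left (union_subset hC.1 hD.1) hCD'
  have hD' := hD.2.2 _ subset_union_right (union_subset hC.1 hD.1) hCD'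
  exact hCD (hC'.symm.trans hD')

theorem isConnSub_of_mem_ccPiranVerts {A B C : Finset V} (hC : C ∈ ccPiranVerts G A B) :
    IsConnSub G C := by
  rcases mem_union.mp hC with h | h <;> exact (mem_comps.mp (mem_sdiff.mp h).1).2.1

theorem isBlobModel_ccPiran (A B : Finset V) : IsBlobModel G (ccPiran G A B) Subtype.val where
  isConnSub C := isConnSub_of_mem_ccPiranVerts C.2
  touches_iff {C D} hCD := by
    have hC := isConnSub_of_mem_ccPiranVerts C.2
    have hD := isConnSub_of_mem_ccPiranVerts D.2
    have hne : C.1 ≠ D.1 := fun h => hCD (Subtype.ext h)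
    have hA (hCA : C.1 ∈ comps G A) (hDA : D.1 ∈ comps G A) := not_touches_of_mem_comps hCA hDA hne
    have hB (hCB : C.1 ∈ comps G B) (hDB : D.1 ∈ comps G B) := not_touches_of_mem_comps hCB hDB hne
    have hCD' : Touches G C.1 D.1 ↔ IsConnSub G (C.1 ∪ D.1) :=
      ⟨hC.union hD, IsConnSub.touches hC.nonempty hD.nonempty⟩
    change _ ↔ _ ∧ IsConnSub G (C.1 ∪ D.1)
    have hCm := C.2
    have hDm := D.2
    simp only [ccPiranVerts, mem_union, mem_sdiff] at hCm hDm ⊢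
    rw [← hCD']
    refine ⟨fun h => ⟨?_, h⟩, And.right⟩
    rcases hCm with ⟨hCA, hCB⟩ | ⟨hCB, hCA⟩ <;> rcases hDm with ⟨hDA, hDB⟩ | ⟨hDB, hDA⟩
    · exact absurd h (hA hCA hDA)
    · exact Or.inl ⟨⟨hCA, hCB⟩, hDB, hDA⟩
    · exact Or.inr ⟨⟨hDA, hDB⟩, hCB, hCA⟩
    · exact absurd h (hB hCB hDB)

end Piran

/-- If `G` is chordal (no induced cycle of length at least 4), then for
any `A, B ⊆ V(G)` the CC-Piran graph `Π^cc(A, B)` is even-hole-free. -/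
theorem stmt14 {V : Type*} [Fintype V] [DecidableEq V] (G : SimpleGraph V)
    (hchordal : ∀ ℓ : ℕ, 4 ≤ ℓ → IsEmpty (SimpleGraph.cycleGraph ℓ ↪g G))
    (A B : Finset V) :
    ∀ ℓ : ℕ, 4 ≤ ℓ → Even ℓ → IsEmpty (SimpleGraph.cycleGraph ℓ ↪g ccPiran G A B) := by
  intro ℓ hℓ _
  refine ⟨fun f => ?_⟩
  obtain ⟨m, hm, ⟨e⟩⟩ := ((isBlobModel_ccPiran A B).comp f).exists_hole hℓ
  exact (hchordal m hm).false e
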